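/- Let p, r : [0,1] → ℝ be continuous with p(x) > 0 and r(x) > 0 for all x ∈ [0,1], and let c ∈ ℝ. If λ < 0 and y₁, y₂ are nontrivial classical solutions of (p·y'')'' − λ·(−y'' + c·r·y) = 0 both satisfying y(0) = y'(0) = y(1) = y'(1) = 0, then y₁ and y₂ are linearly dependent; i.e., every negative eigenvalue of this boundary-value problem has geometric multiplicity 1. -/

import Mathlib

/-!
Write the equation as the first-order system for `(y, y', p y'', (p y'')')`.
For `c ≥ 0` the energy `(p y'')' y - p y'' y' + λ y y'` is nonincreasing and vanishes at both
ends, which forces `y' = 0`: there is no eigenfunction at all. For `c < 0` the system is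
cooperative (all coupling coefficients are nonnegative), so nonnegative initial data stay
nonnegative, and a solution with `y(0) = y'(0) = (p y'')(0) = 0` and `(p y'')'(0) ≠ 0` has
`y(1) ≠ 0`. Hence a solution satisfying (BC1) is determined by `y''(0)`; since `y₂` is
nontrivial, `y₂''(0) ≠ 0`, and `y₂''(0) y₁ - y₁''(0) y₂` vanishes.
-/

open Set

/-- Derivative within the interval `[0,1]`. -/
noncomputable def Dv (y : ℝ → ℝ) : ℝ → ℝ := derivWithin y (Set.Icc 0 1)

/-- `y` is not identically zero on `[0,1]`. -/
def Nontriv (y : ℝ → ℝ) : Prop := ∃ x ∈ Set.Icc (0:ℝ) 1, y x ≠ 0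

/-- `y` is a classical solution of `(p y'')'' - lam * (-y'' + c r y) = 0` on `[0,1]`. -/
def SolT (p r : ℝ → ℝ) (c lam : ℝ) (y : ℝ → ℝ) : Prop :=
  ContDiffOn ℝ 2 y (Set.Icc 0 1) ∧
  ContDiffOn ℝ 2 (fun x => p x * Dv (Dv y) x) (Set.Icc 0 1) ∧
  ∀ x ∈ Set.Icc (0:ℝ) 1,
    Dv (Dv (fun t => p t * Dv (Dv y) t)) x
      - lam * (-(Dv (Dv y) x) + c * r x * y x) = 0

/-- Clamped boundary conditions `y(0) = y'(0) = y(1) = y'(1) = 0`. -/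
def BC1 (y : ℝ → ℝ) : Prop := y 0 = 0 ∧ Dv y 0 = 0 ∧ y 1 = 0 ∧ Dv y 1 = 0

/-- Boundary conditions `y(0) = y'(0) = y'(1) = 0`, `(p y'')'(1) + lam * alpha * y(1) = 0`. -/
def BC2 (p : ℝ → ℝ) (lam alpha : ℝ) (y : ℝ → ℝ) : Prop :=
  y 0 = 0 ∧ Dv y 0 = 0 ∧ Dv y 1 = 0 ∧
  Dv (fun t => p t * Dv (Dv y) t) 1 + lam * alpha * y 1 = 0

/-- Linear dependence of two functions on `[0,1]`. -/
def LinDep (y₁ y₂ : ℝ → ℝ) : Prop :=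
  ∃ a b : ℝ, (a ≠ 0 ∨ b ≠ 0) ∧ ∀ x ∈ Set.Icc (0:ℝ) 1, a * y₁ x + b * y₂ x = 0


open Filter Topology Asymptotics

section Calculus

variable {a b : ℝ} {f f' : ℝ → ℝ}

lemma hasDerivAt_min_zero_sq (v : ℝ) : HasDerivAt (fun v => min v 0 ^ 2) (2 * min v 0) v := by
  rcases lt_trichotomy v 0 with hv | rfl | hv
  · have hloc : (fun v : ℝ => min v 0 ^ 2) =ᶠ[𝓝 v] fun v => v ^ 2 := by
      filter_upwards [Iio_mem_nhds hv] with w hw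
      rw [min_eq_left hw.le]
    rw [min_eq_left hv.le]
    simpa using (hasDerivAt_pow 2 v).congr_of_eventuallyEq hloc
  · have hle : (fun v : ℝ => min v 0 ^ 2) =O[𝓝 0] fun v => v ^ 2 := by
      refine IsBigO.of_bound 1 (Eventually.of_forall fun w => ?_)
      rcases le_total w 0 with hw | hw
      · simp [min_eq_left hw]
      · simp [min_eq_right hw, sq_nonneg]
    rw [hasDerivAt_iff_isLittleO]
    simpa using hle.trans_isLittleO (isLittleO_pow_id one_lt_two)
  · have hloc : (fun v : ℝ => min v 0 ^ 2) =ᶠ[𝓝 v] fun _ => 0 := by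
      filter_upwards [Ioi_mem_nhds hv] with w hw
      simp [min_eq_right (le_of_lt (mem_Ioi.1 hw))]
    rw [min_eq_right hv.le]
    simpa using (hasDerivAt_const v (0 : ℝ)).congr_of_eventuallyEq hloc

lemma continuousOn_of_hasDerivWithinAt
    (hf : ∀ x ∈ Icc a b, HasDerivWithinAt f (f' x) (Icc a b) x) : ContinuousOn f (Icc a b) :=
  fun x hx => (hf x hx).continuousWithinAt

lemma hasDerivWithinAt_interior (hf : ∀ x ∈ Icc a b, HasDerivWithinAt f (f' x) (Icc a b) x) :
    ∀ x ∈ interior (Icc a b), HasDerivWithinAt f (f' x) (interior (Icc a b)) x :=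
  fun x hx => (hf x (interior_subset hx)).mono interior_subset

lemma monotoneOn_Icc_of_hasDerivWithinAt_nonneg
    (hf : ∀ x ∈ Icc a b, HasDerivWithinAt f (f' x) (Icc a b) x) (hf' : ∀ x ∈ Ioo a b, 0 ≤ f' x) :
    MonotoneOn f (Icc a b) :=
  monotoneOn_of_hasDerivWithinAt_nonneg (convex_Icc a b) (continuousOn_of_hasDerivWithinAt hf)
    (hasDerivWithinAt_interior hf) (by rwa [interior_Icc])

lemma strictMonoOn_Icc_of_hasDerivWithinAt_pos
    (hf : ∀ x ∈ Icc a b, HasDerivWithinAt f (f' x) (Icc a b) x) (hf' : ∀ x ∈ Ioo a b, 0 < f' x) :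
    StrictMonoOn f (Icc a b) :=
  strictMonoOn_of_hasDerivWithinAt_pos (convex_Icc a b) (continuousOn_of_hasDerivWithinAt hf)
    (hasDerivWithinAt_interior hf) (by rwa [interior_Icc])

lemma deriv_eq_zero_of_nonpos_of_eq (hab : a < b)
    (hf : ∀ x ∈ Icc a b, HasDerivWithinAt f (f' x) (Icc a b) x) (hf' : ∀ x ∈ Icc a b, f' x ≤ 0)
    (hfab : f a = f b) : ∀ x ∈ Icc a b, f' x = 0 := by
  have hanti : AntitoneOn f (Icc a b) :=
    antitoneOn_of_hasDerivWithinAt_nonpos (convex_Icc a b) (continuousOn_of_hasDerivWithinAt hf)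
      (hasDerivWithinAt_interior hf) (fun x hx => hf' x (interior_subset hx))
  have hconst : ∀ x ∈ Icc a b, f x = f a := fun x hx =>
    le_antisymm (hanti (left_mem_Icc.2 hab.le) hx hx.1)
      (hfab ▸ hanti hx (right_mem_Icc.2 hab.le) hx.2)
  intro x hx
  exact (uniqueDiffOn_Icc hab x hx).eq_deriv _ (hf x hx)
    ((hasDerivWithinAt_const x _ (f a)).congr hconst (hconst x hx))

lemma eq_zero_of_deriv_le_mul_self {K : ℝ}
    (hf : ∀ x ∈ Icc a b, HasDerivWithinAt f (f' x) (Icc a b) x) (hnonneg : ∀ x ∈ Icc a b, 0 ≤ f x)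
    (ha : f a = 0) (hbound : ∀ x ∈ Icc a b, f' x ≤ K * f x) : ∀ x ∈ Icc a b, f x = 0 := by
  intro x hx
  refine le_antisymm ?_ (hnonneg x hx)
  have := le_gronwallBound_of_liminf_deriv_right_le (ε := 0) (continuousOn_of_hasDerivWithinAt hf)
    (fun x hx _ hr => ((hf x (Ico_subset_Icc_self hx)).mono_of_mem_nhdsWithin
      (Icc_mem_nhdsGE_of_mem hx)).liminf_right_slope_le hr)
    ha.le (fun x hx => by simpa using hbound x (Ico_subset_Icc_self hx)) x hx
  rwa [gronwallBound_ε0_δ0] at this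

end Calculus

lemma min_zero_mul_le (u v : ℝ) : min u 0 * v ≤ min u 0 * min v 0 :=
  mul_le_mul_of_nonpos_left (min_le_left v 0) (min_le_right u 0)

theorem cooperative_min_zero_bound {u₀ u₁ w₀ w₁ q s t C : ℝ} (hq : 0 ≤ q) (hs : 0 ≤ s)
    (ht : 0 ≤ t) (hqC : q ≤ C) (hsC : s ≤ C) (htC : t ≤ C) :
    2 * min u₀ 0 * u₁ + 2 * min u₁ 0 * (q * w₀) + 2 * min w₀ 0 * w₁
        + 2 * min w₁ 0 * (s * u₀ + t * w₀)
      ≤ (1 + 2 * C) * (min u₀ 0 ^ 2 + min u₁ 0 ^ 2 + min w₀ 0 ^ 2 + min w₁ 0 ^ 2) := by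
  have hC : 0 ≤ C := hq.trans hqC
  have hprod : ∀ v v' : ℝ, 0 ≤ min v 0 * min v' 0 := fun v v' =>
    mul_nonneg_of_nonpos_of_nonpos (min_le_right v 0) (min_le_right v' 0)
  have hsq : ∀ v v' : ℝ, C * (2 * min v 0 * min v' 0) ≤ C * (min v 0 ^ 2 + min v' 0 ^ 2) :=
    fun v v' => mul_le_mul_of_nonneg_left (two_mul_le_add_sq _ _) hC
  have e₁ : min u₁ 0 * (q * w₀) ≤ C * (min u₁ 0 * min w₀ 0) := calc
    _ = q * (min u₁ 0 * w₀) := by ring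
    _ ≤ q * (min u₁ 0 * min w₀ 0) := mul_le_mul_of_nonneg_left (min_zero_mul_le _ _) hq
    _ ≤ C * (min u₁ 0 * min w₀ 0) := mul_le_mul_of_nonneg_right hqC (hprod _ _)
  have e₃ : min w₁ 0 * (s * u₀ + t * w₀)
      ≤ C * (min w₁ 0 * min u₀ 0) + C * (min w₁ 0 * min w₀ 0) := calc
    _ = s * (min w₁ 0 * u₀) + t * (min w₁ 0 * w₀) := by ring
    _ ≤ s * (min w₁ 0 * min u₀ 0) + t * (min w₁ 0 * min w₀ 0) := by
      gcongr ?_ + ?_ <;> exact mul_le_mul_of_nonneg_left (min_zero_mul_le _ _) ‹_›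
    _ ≤ C * (min w₁ 0 * min u₀ 0) + C * (min w₁ 0 * min w₀ 0) := by
      gcongr ?_ + ?_ <;> exact mul_le_mul_of_nonneg_right ‹_› (hprod _ _)
  linarith [min_zero_mul_le u₀ u₁, min_zero_mul_le w₀ w₁, two_mul_le_add_sq (min u₀ 0) (min u₁ 0),
    two_mul_le_add_sq (min w₀ 0) (min w₁ 0), hsq u₁ w₀, hsq w₁ u₀, hsq w₁ w₀,
    mul_nonneg hC (sq_nonneg (min u₀ 0)), mul_nonneg hC (sq_nonneg (min u₁ 0))]

/-- A solution `y` of `(p y'')'' = λ (-y'' + c r y)` yields the solution `(y, y', p y'', (p y'')')`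
with `q = 1 / p`, `s = λ c r`, `t = -λ / p`. -/
structure SolvesSystem (q s t : ℝ → ℝ) (a b : ℝ) (u₀ u₁ w₀ w₁ : ℝ → ℝ) : Prop where
  deriv_u₀ : ∀ x ∈ Icc a b, HasDerivWithinAt u₀ (u₁ x) (Icc a b) x
  deriv_u₁ : ∀ x ∈ Icc a b, HasDerivWithinAt u₁ (q x * w₀ x) (Icc a b) x
  deriv_w₀ : ∀ x ∈ Icc a b, HasDerivWithinAt w₀ (w₁ x) (Icc a b) x
  deriv_w₁ : ∀ x ∈ Icc a b, HasDerivWithinAt w₁ (s x * u₀ x + t x * w₀ x) (Icc a b) x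

namespace SolvesSystem

variable {q s t : ℝ → ℝ} {a b : ℝ} {u₀ u₁ w₀ w₁ v₀ v₁ z₀ z₁ : ℝ → ℝ}

lemma linear_comb (α β : ℝ) (h : SolvesSystem q s t a b u₀ u₁ w₀ w₁)
    (h' : SolvesSystem q s t a b v₀ v₁ z₀ z₁) :
    SolvesSystem q s t a b (fun x => α * u₀ x + β * v₀ x) (fun x => α * u₁ x + β * v₁ x)
      (fun x => α * w₀ x + β * z₀ x) (fun x => α * w₁ x + β * z₁ x) where
  deriv_u₀ x hx := ((h.deriv_u₀ x hx).const_mul α).add ((h'.deriv_u₀ x hx).const_mul β)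
  deriv_u₁ x hx :=
    (((h.deriv_u₁ x hx).const_mul α).add ((h'.deriv_u₁ x hx).const_mul β)).congr_deriv (by ring)
  deriv_w₀ x hx := ((h.deriv_w₀ x hx).const_mul α).add ((h'.deriv_w₀ x hx).const_mul β)
  deriv_w₁ x hx :=
    (((h.deriv_w₁ x hx).const_mul α).add ((h'.deriv_w₁ x hx).const_mul β)).congr_deriv (by ring)

lemma neg (h : SolvesSystem q s t a b u₀ u₁ w₀ w₁) :
    SolvesSystem q s t a b (-u₀) (-u₁) (-w₀) (-w₁) := by
  convert h.linear_comb (-1) 0 h using 1 <;> funext x <;> simp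

/-- Cooperative systems preserve nonnegativity: `∑ (min uᵢ 0)²` satisfies a Grönwall inequality,
because each `(min uᵢ 0) uᵢ'` is bounded by products of negative parts. -/
theorem nonneg (h : SolvesSystem q s t a b u₀ u₁ w₀ w₁)
    (cq : ContinuousOn q (Icc a b)) (cs : ContinuousOn s (Icc a b)) (ct : ContinuousOn t (Icc a b))
    (hq : ∀ x ∈ Icc a b, 0 ≤ q x) (hs : ∀ x ∈ Icc a b, 0 ≤ s x) (ht : ∀ x ∈ Icc a b, 0 ≤ t x)
    (hu₀ : 0 ≤ u₀ a) (hu₁ : 0 ≤ u₁ a) (hw₀ : 0 ≤ w₀ a) (hw₁ : 0 ≤ w₁ a) :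
    ∀ x ∈ Icc a b, 0 ≤ u₀ x ∧ 0 ≤ u₁ x ∧ 0 ≤ w₀ x ∧ 0 ≤ w₁ x := by
  obtain ⟨Cq, hCq⟩ := isCompact_Icc.bddAbove_image cq
  obtain ⟨Cs, hCs⟩ := isCompact_Icc.bddAbove_image cs
  obtain ⟨Ct, hCt⟩ := isCompact_Icc.bddAbove_image ct
  have hC : ∀ x ∈ Icc a b, q x ≤ max Cq (max Cs Ct) ∧ s x ≤ max Cq (max Cs Ct) ∧
      t x ≤ max Cq (max Cs Ct) := fun x hx =>
    ⟨(hCq (mem_image_of_mem q hx)).trans (le_max_left _ _),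
      (hCs (mem_image_of_mem s hx)).trans (le_max_of_le_right (le_max_left _ _)),
      (hCt (mem_image_of_mem t hx)).trans (le_max_of_le_right (le_max_right _ _))⟩
  let N x := min (u₀ x) 0 ^ 2 + min (u₁ x) 0 ^ 2 + min (w₀ x) 0 ^ 2 + min (w₁ x) 0 ^ 2
  have hN : ∀ x ∈ Icc a b, HasDerivWithinAt N
      (2 * min (u₀ x) 0 * u₁ x + 2 * min (u₁ x) 0 * (q x * w₀ x) + 2 * min (w₀ x) 0 * w₁ x
        + 2 * min (w₁ x) 0 * (s x * u₀ x + t x * w₀ x)) (Icc a b) x := fun x hx =>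
    ((((hasDerivAt_min_zero_sq _).comp_hasDerivWithinAt x (h.deriv_u₀ x hx)).add
      ((hasDerivAt_min_zero_sq _).comp_hasDerivWithinAt x (h.deriv_u₁ x hx))).add
      ((hasDerivAt_min_zero_sq _).comp_hasDerivWithinAt x (h.deriv_w₀ x hx))).add
      ((hasDerivAt_min_zero_sq _).comp_hasDerivWithinAt x (h.deriv_w₁ x hx))
  have hN0 := eq_zero_of_deriv_le_mul_self hN (fun x _ => by positivity)
    (by simp [N, hu₀, hu₁, hw₀, hw₁]) fun x hx =>
      cooperative_min_zero_bound (hq x hx) (hs x hx) (ht x hx) (hC x hx).1 (hC x hx).2.1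
        (hC x hx).2.2
  intro x hx
  have hNx : N x = 0 := hN0 x hx
  have hsq : ∀ v : ℝ, 0 ≤ min v 0 ^ 2 := fun v => sq_nonneg _
  have hnonneg : ∀ v : ℝ, min v 0 ^ 2 = 0 → 0 ≤ v := fun v hv =>
    min_eq_right_iff.1 (pow_eq_zero_iff two_ne_zero |>.1 hv)
  refine ⟨hnonneg _ ?_, hnonneg _ ?_, hnonneg _ ?_, hnonneg _ ?_⟩ <;>
    linarith [hsq (u₀ x), hsq (u₁ x), hsq (w₀ x), hsq (w₁ x)]

theorem pos_right (h : SolvesSystem q s t a b u₀ u₁ w₀ w₁) (hab : a < b)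
    (cq : ContinuousOn q (Icc a b)) (cs : ContinuousOn s (Icc a b)) (ct : ContinuousOn t (Icc a b))
    (hq : ∀ x ∈ Icc a b, 0 < q x) (hs : ∀ x ∈ Icc a b, 0 ≤ s x) (ht : ∀ x ∈ Icc a b, 0 ≤ t x)
    (hu₀ : u₀ a = 0) (hu₁ : u₁ a = 0) (hw₀ : w₀ a = 0) (hw₁ : 0 < w₁ a) : 0 < u₀ b := by
  have hnonneg := h.nonneg cq cs ct (fun x hx => (hq x hx).le) hs ht hu₀.ge hu₁.ge hw₀.ge hw₁.le
  have ha : a ∈ Icc a b := left_mem_Icc.2 hab.le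
  have hw₁_mono : MonotoneOn w₁ (Icc a b) :=
    monotoneOn_Icc_of_hasDerivWithinAt_nonneg h.deriv_w₁ fun x hx =>
      have hx' := Ioo_subset_Icc_self hx
      add_nonneg (mul_nonneg (hs x hx') (hnonneg x hx').1)
        (mul_nonneg (ht x hx') (hnonneg x hx').2.2.1)
  have hw₀_mono : StrictMonoOn w₀ (Icc a b) :=
    strictMonoOn_Icc_of_hasDerivWithinAt_pos h.deriv_w₀ fun x hx =>
      hw₁.trans_le (hw₁_mono ha (Ioo_subset_Icc_self hx) hx.1.le)
  have hu₁_mono : StrictMonoOn u₁ (Icc a b) :=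
    strictMonoOn_Icc_of_hasDerivWithinAt_pos h.deriv_u₁ fun x hx =>
      mul_pos (hq x (Ioo_subset_Icc_self hx)) (hw₀ ▸ hw₀_mono ha (Ioo_subset_Icc_self hx) hx.1)
  have hu₀_mono : StrictMonoOn u₀ (Icc a b) :=
    strictMonoOn_Icc_of_hasDerivWithinAt_pos h.deriv_u₀ fun x hx =>
      hu₁ ▸ hu₁_mono ha (Ioo_subset_Icc_self hx) hx.1
  exact hu₀ ▸ hu₀_mono ha (right_mem_Icc.2 hab.le) hab

/-- Depending on the sign of `w₁ a`, either `u₀` or `-u₀` is positive at `b`, or all initial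
data vanish and `u₀ = 0` by `nonneg` applied to `±u`. -/
theorem eq_zero_of_boundary (h : SolvesSystem q s t a b u₀ u₁ w₀ w₁) (hab : a < b)
    (cq : ContinuousOn q (Icc a b)) (cs : ContinuousOn s (Icc a b)) (ct : ContinuousOn t (Icc a b))
    (hq : ∀ x ∈ Icc a b, 0 < q x) (hs : ∀ x ∈ Icc a b, 0 ≤ s x) (ht : ∀ x ∈ Icc a b, 0 ≤ t x)
    (hu₀ : u₀ a = 0) (hu₁ : u₁ a = 0) (hw₀ : w₀ a = 0) (hu₀b : u₀ b = 0) :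
    ∀ x ∈ Icc a b, u₀ x = 0 := by
  rcases lt_trichotomy (w₁ a) 0 with hneg | hzero | hpos
  · have := h.neg.pos_right hab cq cs ct hq hs ht (by simp [hu₀]) (by simp [hu₁]) (by simp [hw₀])
      (by simpa using hneg)
    simp [hu₀b] at this
  · intro x hx
    have hq' : ∀ x ∈ Icc a b, 0 ≤ q x := fun x hx => (hq x hx).le
    have hnn := h.nonneg cq cs ct hq' hs ht hu₀.ge hu₁.ge hw₀.ge hzero.ge x hx
    have hnn_neg := h.neg.nonneg cq cs ct hq' hs ht (by simp [hu₀]) (by simp [hu₁]) (by simp [hw₀])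
      (by simp [hzero]) x hx
    exact le_antisymm (by simpa using hnn_neg.1) hnn.1
  · have := h.pos_right hab cq cs ct hq hs ht hu₀ hu₁ hw₀ hpos
    simp [hu₀b] at this

/-- The energy `w₁ u₀ - w₀ u₁ - μ u₀ u₁` has derivative `s u₀² - q w₀² - μ u₁² ≤ 0` and vanishes
at both ends, so its derivative vanishes identically; hence `u₁ = 0`. -/
theorem eq_zero_of_energy (h : SolvesSystem q s t a b u₀ u₁ w₀ w₁) (hab : a < b) {μ : ℝ}
    (hμ : 0 < μ) (hq : ∀ x ∈ Icc a b, 0 ≤ q x) (hs : ∀ x ∈ Icc a b, s x ≤ 0)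
    (ht : ∀ x ∈ Icc a b, t x = μ * q x)
    (hu₀a : u₀ a = 0) (hu₁a : u₁ a = 0) (hu₀b : u₀ b = 0) (hu₁b : u₁ b = 0) :
    ∀ x ∈ Icc a b, u₀ x = 0 := by
  let E x := w₁ x * u₀ x - w₀ x * u₁ x - μ * (u₀ x * u₁ x)
  let E' x := s x * u₀ x ^ 2 - q x * w₀ x ^ 2 - μ * u₁ x ^ 2
  have hE : ∀ x ∈ Icc a b, HasDerivWithinAt E (E' x) (Icc a b) x := fun x hx =>
    ((((h.deriv_w₁ x hx).mul (h.deriv_u₀ x hx)).sub ((h.deriv_w₀ x hx).mul (h.deriv_u₁ x hx))).sub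
      (((h.deriv_u₀ x hx).mul (h.deriv_u₁ x hx)).const_mul μ)).congr_deriv
      (by simp only [E', ht x hx]; ring)
  have hE' : ∀ x ∈ Icc a b, E' x ≤ 0 := fun x hx => by
    have := mul_nonpos_of_nonpos_of_nonneg (hs x hx) (sq_nonneg (u₀ x))
    have := mul_nonneg (hq x hx) (sq_nonneg (w₀ x))
    have := mul_nonneg hμ.le (sq_nonneg (u₁ x))
    linarith
  have hE'_zero := deriv_eq_zero_of_nonpos_of_eq hab hE hE' (by simp [E, hu₀a, hu₁a, hu₀b, hu₁b])
  have hu₁ : ∀ x ∈ Icc a b, u₁ x = 0 := fun x hx => by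
    have := mul_nonpos_of_nonpos_of_nonneg (hs x hx) (sq_nonneg (u₀ x))
    have := mul_nonneg (hq x hx) (sq_nonneg (w₀ x))
    have : μ * u₁ x ^ 2 = 0 := by linarith [hE'_zero x hx, mul_nonneg hμ.le (sq_nonneg (u₁ x))]
    simpa [hμ.ne'] using this
  have hmono : MonotoneOn u₀ (Icc a b) :=
    monotoneOn_Icc_of_hasDerivWithinAt_nonneg h.deriv_u₀ fun x hx =>
      (hu₁ x (Ioo_subset_Icc_self hx)).ge
  exact fun x hx => le_antisymm (hu₀b ▸ hmono hx (right_mem_Icc.2 hab.le) hx.2)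
    (hu₀a ▸ hmono (left_mem_Icc.2 hab.le) hx hx.1)

end SolvesSystem

section Solution

lemma hasDerivWithinAt_Dv {f : ℝ → ℝ} (hf : ContDiffOn ℝ 1 f (Icc 0 1)) :
    ∀ x ∈ Icc (0:ℝ) 1, HasDerivWithinAt f (Dv f x) (Icc 0 1) x :=
  fun x hx => (hf.differentiableOn one_ne_zero x hx).hasDerivWithinAt

lemma contDiffOn_Dv {f : ℝ → ℝ} (hf : ContDiffOn ℝ 2 f (Icc 0 1)) :
    ContDiffOn ℝ 1 (Dv f) (Icc 0 1) :=
  hf.derivWithin (uniqueDiffOn_Icc one_pos) (by norm_num)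

variable {p r : ℝ → ℝ} {c lam : ℝ} {y : ℝ → ℝ}

lemma SolT.solvesSystem (hp : ∀ x ∈ Icc (0:ℝ) 1, 0 < p x) (hy : SolT p r c lam y) :
    SolvesSystem (fun x => (p x)⁻¹) (fun x => lam * c * r x) (fun x => -lam * (p x)⁻¹) 0 1
      y (Dv y) (fun x => p x * Dv (Dv y) x) (Dv fun x => p x * Dv (Dv y) x) where
  deriv_u₀ := hasDerivWithinAt_Dv (hy.1.of_le (by norm_num))
  deriv_u₁ x hx := (hasDerivWithinAt_Dv (contDiffOn_Dv hy.1) x hx).congr_deriv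
    (by field_simp [(hp x hx).ne'])
  deriv_w₀ := hasDerivWithinAt_Dv (hy.2.1.of_le (by norm_num))
  deriv_w₁ x hx := (hasDerivWithinAt_Dv (contDiffOn_Dv hy.2.1) x hx).congr_deriv <| by
    have := hy.2.2 x hx
    field_simp [(hp x hx).ne']
    linarith

end Solution

theorem stmt_13_general (p r : ℝ → ℝ) (c lam : ℝ)
    (hpc : ContinuousOn p (Icc 0 1)) (hrc : ContinuousOn r (Icc 0 1))
    (hp : ∀ x ∈ Icc (0:ℝ) 1, 0 < p x) (hr : ∀ x ∈ Icc (0:ℝ) 1, 0 < r x)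
    (hlam : lam < 0) (y₁ y₂ : ℝ → ℝ)
    (hy₁ : SolT p r c lam y₁) (hbc₁ : BC1 y₁)
    (hy₂ : SolT p r c lam y₂) (hnt₂ : Nontriv y₂) (hbc₂ : BC1 y₂) :
    LinDep y₁ y₂ := by
  obtain ⟨x₀, hx₀, hy₂x₀⟩ := hnt₂
  obtain ⟨hy₁0, hy₁'0, hy₁1, -⟩ := hbc₁
  obtain ⟨hy₂0, hy₂'0, hy₂1, hy₂'1⟩ := hbc₂
  have sys₂ := hy₂.solvesSystem hp
  have hq : ∀ x ∈ Icc (0:ℝ) 1, 0 < (p x)⁻¹ := fun x hx => inv_pos.2 (hp x hx)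
  rcases le_or_gt 0 c with hc | hc
  · refine absurd (sys₂.eq_zero_of_energy one_pos (neg_pos.2 hlam) (fun x hx => (hq x hx).le)
      (fun x hx => ?_) (fun _ _ => rfl) hy₂0 hy₂'0 hy₂1 hy₂'1 x₀ hx₀) hy₂x₀
    exact mul_nonpos_of_nonpos_of_nonneg (mul_nonpos_of_nonpos_of_nonneg hlam.le hc) (hr x hx).le
  have cq : ContinuousOn (fun x => (p x)⁻¹) (Icc 0 1) := hpc.inv₀ fun x hx => (hp x hx).ne'
  have cs : ContinuousOn (fun x => lam * c * r x) (Icc 0 1) := continuousOn_const.mul hrc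
  have ct : ContinuousOn (fun x => -lam * (p x)⁻¹) (Icc 0 1) := continuousOn_const.mul cq
  have hs : ∀ x ∈ Icc (0:ℝ) 1, 0 ≤ lam * c * r x := fun x hx =>
    (mul_pos (mul_pos_of_neg_of_neg hlam hc) (hr x hx)).le
  have ht : ∀ x ∈ Icc (0:ℝ) 1, 0 ≤ -lam * (p x)⁻¹ := fun x hx =>
    mul_nonneg (neg_nonneg.2 hlam.le) (hq x hx).le
  have hb₂ : Dv (Dv y₂) 0 ≠ 0 := fun h => hy₂x₀ <|
    sys₂.eq_zero_of_boundary one_pos cq cs ct hq hs ht hy₂0 hy₂'0 (by simp [h]) hy₂1 x₀ hx₀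
  refine ⟨Dv (Dv y₂) 0, -Dv (Dv y₁) 0, Or.inl hb₂, fun x hx => ?_⟩
  exact ((hy₁.solvesSystem hp).linear_comb _ _ sys₂).eq_zero_of_boundary one_pos cq cs ct hq hs ht
    (by simp [hy₁0, hy₂0]) (by simp [hy₁'0, hy₂'0]) (by ring) (by simp [hy₁1, hy₂1]) x hx

theorem stmt_13 (p r : ℝ → ℝ) (c lam : ℝ)
    (hpc : ContinuousOn p (Icc 0 1)) (hrc : ContinuousOn r (Icc 0 1))
    (hp : ∀ x ∈ Icc (0:ℝ) 1, 0 < p x) (hr : ∀ x ∈ Icc (0:ℝ) 1, 0 < r x)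
    (hlam : lam < 0) (y₁ y₂ : ℝ → ℝ)
    (hy₁ : SolT p r c lam y₁) (hnt₁ : Nontriv y₁) (hbc₁ : BC1 y₁)
    (hy₂ : SolT p r c lam y₂) (hnt₂ : Nontriv y₂) (hbc₂ : BC1 y₂) :
    LinDep y₁ y₂ :=
  stmt_13_general p r c lam hpc hrc hp hr hlam y₁ y₂ hy₁ hbc₁ hy₂ hnt₂ hbc₂
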